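/- For each d ≥ 2 there exists a constant c'_d ∈ (0,∞) such that Q_d(r) ≤ c'_d (1 ∨ r) exp(−(d−1)r/2) for all r ≥ 0, where Q_d(r) := Q^𝔹_d(tanh(r/2);0). -/

import Mathlib

open MeasureTheory intervalIntegral

/-- `𝔖_k`: the `k`-dimensional Lebesgue surface volume of the unit `k`-sphere in `ℝ^{k+1}`,
`𝔖_k = 2 π^{(k+1)/2} / Γ((k+1)/2)`. -/
noncomputable def sphereSurf (k : ℕ) : ℝ :=
  2 * Real.pi ^ (((k:ℝ) + 1) / 2) / Real.Gamma (((k:ℝ) + 1) / 2)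

/-- `Q^𝔹_d(ρ;0) = (𝔖_{d-2}/𝔖_{d-1}) ∫₀^π ((1−ρ²)/(1+ρ²−2ρcosθ))^{(d-1)/2} (sinθ)^{d-2} dθ`. -/
noncomputable def Qball (d : ℕ) (ρ : ℝ) : ℝ :=
  (sphereSurf (d - 2) / sphereSurf (d - 1)) *
    ∫ θ in (0:ℝ)..Real.pi,
      ((1 - ρ ^ 2) / (1 + ρ ^ 2 - 2 * ρ * Real.cos θ)) ^ (((d:ℝ) - 1) / 2)
        * (Real.sin θ) ^ (d - 2)

/-- `Q_d(r) := Q^𝔹_d(tanh(r/2); 0)`. -/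
noncomputable def Qhyp (d : ℕ) (r : ℝ) : ℝ := Qball d (Real.tanh (r / 2))

/-!
Write `ρ = tanh (r / 2)` and `ε = 1 - ρ`, so that `e^{-r} ≤ ε ≤ 2 e^{-r}`. Since
`1 + ρ² - 2ρ cos θ = (1 - ρ cos θ)² + (ρ sin θ)²`, the denominator of the integrand dominates both
`ε²` and `(ρ sin θ)²`. For `ρ ≥ 1/2` this bounds the integrand by
`4 (8ε)^{(d-1)/2} / (ε + sin θ)`, and Jordan's inequality `sin θ ≥ 2θ/π` gives
`∫₀^π (ε + sin θ)⁻¹ dθ ≤ π log ((1 + ε) / ε) ≤ π (1 + r)`: this logarithm is the factor `1 ∨ r`.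
For `ρ ≤ 1/2` the radius `r` is bounded and the integrand is at most `3^{(d-1)/2}`.
-/

open Real Set

lemma sphereSurf_pos (k : ℕ) : 0 < sphereSurf k := by
  have := Gamma_pos_of_pos (by positivity : (0:ℝ) < ((k:ℝ) + 1) / 2)
  unfold sphereSurf
  positivity

lemma Real.one_sub_tanh_half_eq (x : ℝ) : 1 - tanh (x / 2) = 2 / (exp x + 1) := by
  have hx : exp x = exp (x / 2) ^ 2 := by rw [← exp_nat_mul]; ring_nf
  rw [tanh_eq, exp_neg, hx]
  field_simp
  ring

lemma Real.exp_neg_le_one_sub_tanh_half {x : ℝ} (hx : 0 ≤ x) : exp (-x) ≤ 1 - tanh (x / 2) := by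
  rw [Real.one_sub_tanh_half_eq, exp_neg, inv_eq_one_div,
    div_le_div_iff₀ (exp_pos x) (by positivity)]
  linarith [one_le_exp hx]

lemma Real.one_sub_tanh_half_le (x : ℝ) : 1 - tanh (x / 2) ≤ 2 * exp (-x) := by
  rw [Real.one_sub_tanh_half_eq, exp_neg, ← div_eq_mul_inv]
  exact div_le_div_of_nonneg_left zero_le_two (exp_pos x) (by linarith)

lemma Real.tanh_nonneg {x : ℝ} (hx : 0 ≤ x) : 0 ≤ tanh x := by
  rw [tanh_eq_sinh_div_cosh]
  exact div_nonneg (sinh_nonneg_iff.2 hx) (cosh_pos x).le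

lemma Real.log_one_add_div_le {ε r : ℝ} (hε : exp (-r) ≤ ε) (hε1 : ε ≤ 1) :
    log ((1 + ε) / ε) ≤ 1 + r := by
  have hε0 : 0 < ε := (exp_pos _).trans_le hε
  rw [log_div (by positivity) hε0.ne']
  have h1 : log (1 + ε) ≤ ε := by linarith [log_le_sub_one_of_pos (by positivity : 0 < 1 + ε)]
  have h2 : -r ≤ log ε := by simpa using log_le_log (exp_pos _) hε
  linarith

lemma intervalIntegrable_inv_add_sin {ε a b : ℝ} (hε : 0 < ε) (ha : a ∈ Icc 0 π)
    (hb : b ∈ Icc 0 π) : IntervalIntegrable (fun θ => (ε + sin θ)⁻¹) volume a b :=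
  ContinuousOn.intervalIntegrable <| ContinuousOn.inv₀ (by fun_prop) fun θ hθ =>
    have hθ' := uIcc_subset_Icc ha hb hθ
    (add_pos_of_pos_of_nonneg hε (sin_nonneg_of_nonneg_of_le_pi hθ'.1 hθ'.2)).ne'

lemma integral_inv_add_sin_le {ε : ℝ} (hε : 0 < ε) :
    ∫ θ in 0..π, (ε + sin θ)⁻¹ ≤ π * log ((1 + ε) / ε) := by
  have hπ := pi_pos
  have h0 : (0:ℝ) ∈ Icc 0 π := ⟨le_rfl, hπ.le⟩
  have hhalf : π / 2 ∈ Icc 0 π := ⟨by positivity, by linarith⟩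
  have hsymm : ∫ θ in π / 2..π, (ε + sin θ)⁻¹ = ∫ θ in 0..π / 2, (ε + sin θ)⁻¹ := by
    simpa [sin_pi_sub, show π - π / 2 = π / 2 by ring] using
      (intervalIntegral.integral_comp_sub_left (fun θ => (ε + sin θ)⁻¹) π
        (a := 0) (b := π / 2)).symm
  have hjordan : ∫ θ in 0..π / 2, (ε + sin θ)⁻¹ ≤ ∫ θ in 0..π / 2, (2 / π * θ + ε)⁻¹ := by
    refine intervalIntegral.integral_mono_on (by positivity)
      (intervalIntegrable_inv_add_sin hε h0 hhalf) ?_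
      fun θ hθ => inv_anti₀ (by have := hθ.1; positivity) (by linarith [mul_le_sin hθ.1 hθ.2])
    refine ContinuousOn.intervalIntegrable (ContinuousOn.inv₀ (by fun_prop) fun θ hθ => ?_)
    rw [uIcc_of_le (by positivity)] at hθ
    have := hθ.1
    positivity
  have hlinear : ∫ θ in 0..π / 2, (2 / π * θ + ε)⁻¹ = π / 2 * log ((1 + ε) / ε) := by
    rw [intervalIntegral.integral_comp_mul_add (fun x => x⁻¹) (by positivity),
      integral_inv_of_pos (by positivity) (by positivity)]
    simp only [smul_eq_mul, mul_zero, zero_add]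
    field_simp
  rw [← intervalIntegral.integral_add_adjacent_intervals
    (intervalIntegrable_inv_add_sin hε h0 hhalf)
    (intervalIntegrable_inv_add_sin hε hhalf ⟨hπ.le, le_rfl⟩), hsymm]
  linarith

lemma sq_one_sub_le_one_add_sq_sub_mul_cos {ρ : ℝ} (hρ : 0 ≤ ρ) (θ : ℝ) :
    (1 - ρ) ^ 2 ≤ 1 + ρ ^ 2 - 2 * ρ * cos θ := by
  nlinarith [cos_le_one θ]

lemma sq_mul_sin_le_one_add_sq_sub_mul_cos (ρ θ : ℝ) :
    (ρ * sin θ) ^ 2 ≤ 1 + ρ ^ 2 - 2 * ρ * cos θ := by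
  nlinarith [sin_sq_add_cos_sq θ, sq_nonneg (1 - ρ * cos θ)]

noncomputable def qballIntegrand (d : ℕ) (ρ θ : ℝ) : ℝ :=
  ((1 - ρ ^ 2) / (1 + ρ ^ 2 - 2 * ρ * cos θ)) ^ (((d:ℝ) - 1) / 2) * sin θ ^ (d - 2)

lemma Qball_eq (d : ℕ) (ρ : ℝ) :
    Qball d ρ = sphereSurf (d - 2) / sphereSurf (d - 1) * ∫ θ in 0..π, qballIntegrand d ρ θ :=
  rfl

lemma continuous_qballIntegrand (d : ℕ) {ρ : ℝ} (hρ0 : 0 ≤ ρ) (hρ1 : ρ < 1) :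
    Continuous (qballIntegrand d ρ) := by
  have hD (θ : ℝ) : 0 < 1 + ρ ^ 2 - 2 * ρ * cos θ :=
    (pow_pos (sub_pos.2 hρ1) 2).trans_le (sq_one_sub_le_one_add_sq_sub_mul_cos hρ0 θ)
  have hbase : Continuous fun θ => (1 - ρ ^ 2) / (1 + ρ ^ 2 - 2 * ρ * cos θ) :=
    continuous_const.div (by fun_prop) fun θ => (hD θ).ne'
  refine (hbase.rpow_const fun θ => Or.inl ?_).mul (by fun_prop)
  exact (div_pos (by nlinarith) (hD θ)).ne'

lemma qballIntegrand_le_of_lt_one {d : ℕ} (hd : 1 ≤ d) {ρ : ℝ} (hρ0 : 0 ≤ ρ) (hρ1 : ρ < 1)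
    (θ : ℝ) : qballIntegrand d ρ θ ≤ ((1 + ρ) / (1 - ρ)) ^ (((d:ℝ) - 1) / 2) := by
  have hε : 0 < 1 - ρ := sub_pos.2 hρ1
  have hD := sq_one_sub_le_one_add_sq_sub_mul_cos hρ0 θ
  have hbase : (1 - ρ ^ 2) / (1 + ρ ^ 2 - 2 * ρ * cos θ) ≤ (1 + ρ) / (1 - ρ) := by
    calc (1 - ρ ^ 2) / (1 + ρ ^ 2 - 2 * ρ * cos θ) ≤ (1 - ρ ^ 2) / (1 - ρ) ^ 2 :=
          div_le_div_of_nonneg_left (by nlinarith) (by positivity) hD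
      _ = (1 + ρ) / (1 - ρ) := by field_simp; ring
  have hbase0 : 0 ≤ (1 - ρ ^ 2) / (1 + ρ ^ 2 - 2 * ρ * cos θ) :=
    div_nonneg (by nlinarith) ((sq_nonneg _).trans hD)
  have hsin : sin θ ^ (d - 2) ≤ 1 :=
    (le_abs_self _).trans (by rw [abs_pow]; exact pow_le_one₀ (abs_nonneg _) (abs_sin_le_one θ))
  have hp : (0:ℝ) ≤ ((d:ℝ) - 1) / 2 := by
    have : (1:ℝ) ≤ d := by exact_mod_cast hd
    linarith
  calc qballIntegrand d ρ θ ≤ ((1 - ρ ^ 2) / (1 + ρ ^ 2 - 2 * ρ * cos θ)) ^ (((d:ℝ) - 1) / 2) :=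
        mul_le_of_le_one_right (rpow_nonneg hbase0 _) hsin
    _ ≤ _ := rpow_le_rpow hbase0 hbase hp

lemma qballIntegrand_le_of_half_le {d : ℕ} (hd : 2 ≤ d) {ρ θ : ℝ} (hρ : 1 / 2 ≤ ρ) (hρ1 : ρ < 1)
    (hθ0 : 0 ≤ θ) (hθ : θ ≤ π) :
    qballIntegrand d ρ θ ≤ 4 * (8 * (1 - ρ)) ^ (((d:ℝ) - 1) / 2) / (1 - ρ + sin θ) := by
  set ε := 1 - ρ
  set s := sin θ
  set D := 1 + ρ ^ 2 - 2 * ρ * cos θ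
  set q := (1 - ρ ^ 2) / D
  have hε : 0 < ε := sub_pos.2 hρ1
  have hs : 0 ≤ s := sin_nonneg_of_nonneg_of_le_pi hθ0 hθ
  have hεD : ε ^ 2 ≤ D := sq_one_sub_le_one_add_sq_sub_mul_cos (by linarith) θ
  have hsD : s ^ 2 ≤ 4 * D := by
    have h4ρ : 0 ≤ 4 * ρ ^ 2 - 1 := by nlinarith
    nlinarith [sq_mul_sin_le_one_add_sq_sub_mul_cos ρ θ, mul_nonneg (sq_nonneg s) h4ρ]
  have hD : ((ε + s) / 4) ^ 2 ≤ D := by nlinarith [sq_nonneg (ε - s)]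
  have hDpos : 0 < D := (pow_pos hε 2).trans_le hεD
  have hnum : 1 - ρ ^ 2 ≤ 2 * ε := by nlinarith
  have hq0 : 0 < q := div_pos (by nlinarith) hDpos
  have hqs : q * s ^ 2 ≤ 8 * ε := by
    rw [div_mul_eq_mul_div, div_le_iff₀ hDpos]
    nlinarith [mul_le_mul_of_nonneg_right hnum (sq_nonneg s)]
  have hq : q ≤ 8 * ε * (4 / (ε + s)) ^ 2 :=
    calc q ≤ 2 * ε / ((ε + s) / 4) ^ 2 := div_le_div₀ (by positivity) hnum (by positivity) hD
      _ ≤ 8 * ε / ((ε + s) / 4) ^ 2 := by gcongr; linarith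
      _ = 8 * ε * (4 / (ε + s)) ^ 2 := by field_simp
  have hm : ((d:ℝ) - 1) / 2 = ((d - 2 : ℕ) : ℝ) / 2 + 1 / 2 := by
    rw [Nat.cast_sub hd]; ring
  have hsm : s ^ (d - 2) = (s ^ 2) ^ (((d - 2 : ℕ) : ℝ) / 2) := by
    rw [← rpow_natCast s 2, ← rpow_mul hs, ← rpow_natCast]; congr 1; push_cast; ring
  -- Split `q ^ p * s ^ m` as `(q * s ^ 2) ^ (m / 2) * q ^ (1 / 2)` and bound each factor.
  calc qballIntegrand d ρ θ
      = (q * s ^ 2) ^ (((d - 2 : ℕ) : ℝ) / 2) * q ^ (1 / 2 : ℝ) := by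
        rw [qballIntegrand, hm, rpow_add hq0, hsm, mul_rpow hq0.le (sq_nonneg s)]; ring
    _ ≤ (8 * ε) ^ (((d - 2 : ℕ) : ℝ) / 2) * (8 * ε * (4 / (ε + s)) ^ 2) ^ (1 / 2 : ℝ) := by
        gcongr
    _ = 4 * (8 * ε) ^ (((d:ℝ) - 1) / 2) / (ε + s) := by
        rw [mul_rpow (x := 8 * ε) (by positivity) (by positivity), ← sqrt_eq_rpow (_ ^ 2),
          sqrt_sq (by positivity), hm, rpow_add (by positivity)]
        ring

lemma integral_qballIntegrand_le_of_le_half {d : ℕ} (hd : 1 ≤ d) {ρ : ℝ} (hρ0 : 0 ≤ ρ)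
    (hρ : ρ ≤ 1 / 2) : ∫ θ in 0..π, qballIntegrand d ρ θ ≤ π * 3 ^ (((d:ℝ) - 1) / 2) := by
  have hρ1 : ρ < 1 := by linarith
  have hp : (0:ℝ) ≤ ((d:ℝ) - 1) / 2 := by
    have : (1:ℝ) ≤ d := by exact_mod_cast hd
    linarith
  have hbound (θ : ℝ) : qballIntegrand d ρ θ ≤ 3 ^ (((d:ℝ) - 1) / 2) :=
    (qballIntegrand_le_of_lt_one hd hρ0 hρ1 θ).trans <| rpow_le_rpow (by positivity)
      ((div_le_iff₀ (by linarith)).2 (by linarith)) hp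
  simpa using intervalIntegral.integral_mono_on pi_pos.le
    ((continuous_qballIntegrand d hρ0 hρ1).intervalIntegrable 0 π)
    (intervalIntegrable_const (μ := volume)) fun θ _ => hbound θ

lemma integral_qballIntegrand_le_of_half_le {d : ℕ} (hd : 2 ≤ d) {ρ : ℝ} (hρ : 1 / 2 ≤ ρ)
    (hρ1 : ρ < 1) : ∫ θ in 0..π, qballIntegrand d ρ θ ≤
      4 * (8 * (1 - ρ)) ^ (((d:ℝ) - 1) / 2) * (π * log ((1 + (1 - ρ)) / (1 - ρ))) := by
  have hε : 0 < 1 - ρ := sub_pos.2 hρ1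
  calc ∫ θ in 0..π, qballIntegrand d ρ θ
      ≤ ∫ θ in 0..π, 4 * (8 * (1 - ρ)) ^ (((d:ℝ) - 1) / 2) * (1 - ρ + sin θ)⁻¹ :=
        intervalIntegral.integral_mono_on pi_pos.le
          ((continuous_qballIntegrand d (by linarith) hρ1).intervalIntegrable 0 π)
          ((intervalIntegrable_inv_add_sin hε ⟨le_rfl, pi_pos.le⟩ ⟨pi_pos.le, le_rfl⟩).const_mul _)
          fun θ hθ => qballIntegrand_le_of_half_le hd hρ hρ1 hθ.1 hθ.2
    _ ≤ _ := by
        rw [intervalIntegral.integral_const_mul]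
        gcongr
        exact integral_inv_add_sin_le hε

lemma integral_qballIntegrand_tanh_half_le {d : ℕ} (hd : 2 ≤ d) {r : ℝ} (hr : 0 ≤ r) :
    ∫ θ in 0..π, qballIntegrand d (tanh (r / 2)) θ ≤
      8 * π * 16 ^ (((d:ℝ) - 1) / 2) * max 1 r * exp (-(((d:ℝ) - 1) / 2) * r) := by
  have hp : 0 ≤ ((d:ℝ) - 1) / 2 := by
    have : (2:ℝ) ≤ d := by exact_mod_cast hd
    linarith
  set p := ((d:ℝ) - 1) / 2
  set ρ := tanh (r / 2)
  have hlow : exp (-r) ≤ 1 - ρ := Real.exp_neg_le_one_sub_tanh_half hr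
  have hhigh : 1 - ρ ≤ 2 * exp (-r) := Real.one_sub_tanh_half_le r
  have hexp : exp (-p * r) = exp (-r) ^ p := by rw [← exp_mul]; ring_nf
  have hmax : 1 ≤ max 1 r := le_max_left 1 r
  rcases le_total ρ (1 / 2) with hρ | hρ
  · calc ∫ θ in 0..π, qballIntegrand d ρ θ
        ≤ π * 3 ^ p :=
          integral_qballIntegrand_le_of_le_half (by omega) (Real.tanh_nonneg (by linarith)) hρ
      _ ≤ π * 3 ^ p * (4 * exp (-r)) ^ p :=
          le_mul_of_one_le_right (by positivity) (one_le_rpow (by linarith) hp)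
      _ = 1 * π * 12 ^ p * 1 * exp (-p * r) := by
          rw [hexp, mul_rpow (by norm_num) (exp_pos _).le, show (12:ℝ) = 3 * 4 by norm_num,
            mul_rpow (by norm_num) (by norm_num)]
          ring
      _ ≤ _ := by gcongr <;> norm_num [hmax]
  · calc ∫ θ in 0..π, qballIntegrand d ρ θ
        ≤ 4 * (8 * (1 - ρ)) ^ p * (π * log ((1 + (1 - ρ)) / (1 - ρ))) :=
          integral_qballIntegrand_le_of_half_le hd hρ (tanh_lt_one _)
      _ ≤ 4 * (16 * exp (-r)) ^ p * (π * (2 * max 1 r)) := by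
          have hε : 0 < 1 - ρ := sub_pos.2 (tanh_lt_one _)
          have hlog0 : 0 ≤ log ((1 + (1 - ρ)) / (1 - ρ)) :=
            log_nonneg ((le_div_iff₀ hε).2 (by linarith))
          have hlog := Real.log_one_add_div_le hlow (by linarith)
          gcongr ?_ * ?_ ^ p * (π * ?_)
          · linarith
          · linarith [le_max_right 1 r]
      _ = _ := by
          rw [hexp, mul_rpow (by norm_num) (exp_pos _).le]
          ring

/-- For each `d ≥ 2` there is `c'_d ∈ (0,∞)` with
`Q_d(r) ≤ c'_d (1 ∨ r) exp(−(d−1)r/2)` for all `r ≥ 0`. -/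
theorem Qhyp_upper_bound (d : ℕ) (hd : 2 ≤ d) :
    ∃ c : ℝ, 0 < c ∧ ∀ r ≥ (0:ℝ),
      Qhyp d r ≤ c * max 1 r * Real.exp (-(((d:ℝ) - 1) / 2) * r) := by
  set S := sphereSurf (d - 2) / sphereSurf (d - 1)
  have hS : 0 < S := div_pos (sphereSurf_pos _) (sphereSurf_pos _)
  refine ⟨S * (8 * π * 16 ^ (((d:ℝ) - 1) / 2)), by positivity, fun r hr => ?_⟩
  calc Qhyp d r = S * ∫ θ in 0..π, qballIntegrand d (tanh (r / 2)) θ := Qball_eq d _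
    _ ≤ S * (8 * π * 16 ^ (((d:ℝ) - 1) / 2) * max 1 r * exp (-(((d:ℝ) - 1) / 2) * r)) :=
        mul_le_mul_of_nonneg_left (integral_qballIntegrand_tanh_half_le hd hr) hS.le
    _ = _ := by ring
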